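/- Let 𝔤₃ be a 3-dimensional unimodular Lie algebra and 𝔤 = 𝔤₃ ⊕ ℝ². Then 𝔤 admits a hypo structure. Concretely, choosing a basis e¹,e²,e³ of 𝔤₃* and e⁴,e⁵ of (ℝ²)*, the 2-forms e¹², e¹³, e²³ are all closed (by unimodularity of 𝔤₃), and the coframe f¹=e¹, f²=e², f³=e⁴, f⁴=e⁵, f⁵=e³ determines a hypo structure: d(e¹²+e⁴⁵) = 0, d((e¹⁴+e⁵²)∧e³) = 0, d((e¹⁵+e²⁴)∧e³) = 0. -/
import Mathlib

open ExteriorAlgebra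

/-- Basis `e¹,…,e⁵` of `𝔤*` (0-indexed: `e i` is `e^{i+1}`) inside `Λ*𝔤*`. -/
noncomputable def e (i : Fin 5) : ExteriorAlgebra ℝ (Fin 5 → ℝ) := ι ℝ (Pi.single i 1)

/-- The space of 2-forms `Λ²𝔤*` (spanned by decomposable 2-forms). -/
noncomputable def Lam2 : Submodule ℝ (ExteriorAlgebra ℝ (Fin 5 → ℝ)) :=
  Submodule.span ℝ {x | ∃ a b : Fin 5 → ℝ, x = ι ℝ a * ι ℝ b}

/-- The space of 3-forms `Λ³𝔤*`. -/
noncomputable def Lam3 : Submodule ℝ (ExteriorAlgebra ℝ (Fin 5 → ℝ)) :=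
  Submodule.span ℝ {x | ∃ a b c : Fin 5 → ℝ, x = ι ℝ a * ι ℝ b * ι ℝ c}

/-- A hypo structure on the 5-dimensional Lie algebra encoded by its Chevalley–Eilenberg
differential `d`: a quadruplet `(α, ω₁, ω₂, ω₃)` of a 1-form `α = ι a` and 2-forms `ωᵢ`
with `ωᵢ∧ωⱼ = δᵢⱼ v` for a 4-form `v` with `v∧α ≠ 0`, such that
`dω₁ = 0`, `d(ω₂∧α) = 0`, `d(ω₃∧α) = 0`. -/
def IsHypo (d : ExteriorAlgebra ℝ (Fin 5 → ℝ) →ₗ[ℝ] ExteriorAlgebra ℝ (Fin 5 → ℝ))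
    (a : Fin 5 → ℝ) (ω : Fin 3 → ExteriorAlgebra ℝ (Fin 5 → ℝ)) : Prop :=
  (∀ i, ω i ∈ Lam2) ∧
  (∃ v : ExteriorAlgebra ℝ (Fin 5 → ℝ),
    (∀ i j, ω i * ω j = if i = j then v else 0) ∧ v * ι ℝ a ≠ 0) ∧
  d (ω 0) = 0 ∧ d (ω 1 * ι ℝ a) = 0 ∧ d (ω 2 * ι ℝ a) = 0

lemma hsq (i : Fin 5) : e i * e i = 0 := ι_sq_zero _
lemma hsq' (i : Fin 5) (x : ExteriorAlgebra ℝ (Fin 5 → ℝ)) : e i * (e i * x) = 0 := by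
  rw [← mul_assoc, hsq, zero_mul]
lemma hsw (i j : Fin 5) (_h : i < j) : e j * e i = -(e i * e j) :=
  eq_neg_of_add_eq_zero_left (ι_add_mul_swap _ _)
lemma hsw' (i j : Fin 5) (h : i < j) (x : ExteriorAlgebra ℝ (Fin 5 → ℝ)) :
    e j * (e i * x) = -(e i * (e j * x)) := by
  rw [← mul_assoc, hsw i j h, neg_mul, mul_assoc]

set_option maxRecDepth 4000 in
/-- The top monomial `e⁰∧e¹∧e²∧e³∧e⁴` is nonzero. -/
lemma top_ne_zero : e 0 * (e 1 * (e 2 * (e 3 * e 4))) ≠ 0 := by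
  have hmono : e 0 * (e 1 * (e 2 * (e 3 * e 4))) =
      ιMulti ℝ 5 (fun i : Fin 5 => (Pi.single i 1 : Fin 5 → ℝ)) := by
    rw [ιMulti_apply]
    simp only [List.ofFn_succ, List.ofFn_zero, List.prod_cons, List.prod_nil, mul_one, e]
    rfl
  intro h
  rw [hmono] at h
  let f : ∀ i : ℕ, (Fin 5 → ℝ) [⋀^Fin i]→ₗ[ℝ] ℝ := fun i =>
    match i with
    | 5 => Matrix.detRowAlternating
    | _ => 0
  have h2 := congrArg (liftAlternating f) h
  rw [liftAlternating_apply_ιMulti, map_zero] at h2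
  have h3 : f 5 (fun i : Fin 5 => (Pi.single i 1 : Fin 5 → ℝ)) = 1 := by
    show Matrix.det (Matrix.of fun i j => (Pi.single i 1 : Fin 5 → ℝ) j) = 1
    rw [show (Matrix.of fun i j => (Pi.single i 1 : Fin 5 → ℝ) j) = 1 by
      ext i j; simp [Matrix.one_apply, Pi.single_apply, eq_comm]]
    exact Matrix.det_one
  rw [h2] at h3
  exact zero_ne_one h3

set_option maxHeartbeats 1600000 in
/-- let `𝔤₃` be a 3-dimensional unimodular Lie algebra and `𝔤 = 𝔤₃ ⊕ ℝ²`,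
encoded as a bracket `B` on `ℝ⁵` with values in the first three coordinates and with
`e₄, e₅` central, linked to the Chevalley–Eilenberg differential `d` by
`dξ = −Σ_{i<j} ξ([eᵢ,eⱼ]) eⁱ∧eʲ`. Then `e¹², e¹³, e²³` are closed, the coframe
`f¹=e¹, f²=e², f³=e⁴, f⁴=e⁵, f⁵=e³` determines a hypo structure
(`d(e¹²+e⁴⁵) = 0`, `d((e¹⁴+e⁵²)∧e³) = 0`, `d((e¹⁵+e²⁴)∧e³) = 0`), and
`𝔤` admits a hypo structure. -/
theorem stmt12
    (B : (Fin 5 → ℝ) →ₗ[ℝ] (Fin 5 → ℝ) →ₗ[ℝ] (Fin 5 → ℝ))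
    (hanti : ∀ X Y, B X Y = - B Y X)
    (hjac : ∀ X Y Z, B X (B Y Z) = B (B X Y) Z + B Y (B X Z))
    (hval : ∀ X Y, ∀ i : Fin 5, 3 ≤ (i : ℕ) → B X Y i = 0)
    (hcent : ∀ X, B X (Pi.single 3 1) = 0 ∧ B X (Pi.single 4 1) = 0)
    (hunim : ∀ X, LinearMap.trace ℝ (Fin 5 → ℝ) (B X) = 0)
    (d : ExteriorAlgebra ℝ (Fin 5 → ℝ) →ₗ[ℝ] ExteriorAlgebra ℝ (Fin 5 → ℝ))
    (hone : d 1 = 0)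
    (hleib : ∀ (v : Fin 5 → ℝ) (x : ExteriorAlgebra ℝ (Fin 5 → ℝ)),
      d (ι ℝ v * x) = d (ι ℝ v) * x - ι ℝ v * d x)
    (hlink : ∀ ξ : Fin 5 → ℝ, d (ι ℝ ξ) =
      -((1 : ℝ)/2) • ∑ i : Fin 5, ∑ j : Fin 5,
        (∑ k : Fin 5, ξ k * B (Pi.single i 1) (Pi.single j 1) k) • (e i * e j)) :
    d (e 0 * e 1) = 0 ∧ d (e 0 * e 2) = 0 ∧ d (e 1 * e 2) = 0 ∧
    d (e 0 * e 1 + e 3 * e 4) = 0 ∧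
    d ((e 0 * e 3 + e 4 * e 1) * e 2) = 0 ∧
    d ((e 0 * e 4 + e 1 * e 3) * e 2) = 0 ∧
    ∃ (a : Fin 5 → ℝ) (ω : Fin 3 → ExteriorAlgebra ℝ (Fin 5 → ℝ)), IsHypo d a ω := by
  have hB3 : ∀ X, B X (Pi.single 3 1) = 0 := fun X => (hcent X).1
  have hB4 : ∀ X, B X (Pi.single 4 1) = 0 := fun X => (hcent X).2
  have hB3' : ∀ Y, B (Pi.single 3 1) Y = 0 := fun Y => by rw [hanti, hB3, neg_zero]
  have hB4' : ∀ Y, B (Pi.single 4 1) Y = 0 := fun Y => by rw [hanti, hB4, neg_zero]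
  have hBXX : ∀ X, B X X = 0 := fun X => by
    funext i; have := congrFun (hanti X X) i
    simp only [Pi.neg_apply] at this; simpa using by linarith
  have hv3 : ∀ X Y, B X Y 3 = 0 := fun X Y => hval X Y 3 (by decide)
  have hv4 : ∀ X Y, B X Y 4 = 0 := fun X Y => hval X Y 4 (by decide)
  -- trace formula
  have htr : ∀ X, (B X (Pi.single 0 1)) 0 + (B X (Pi.single 1 1)) 1 + (B X (Pi.single 2 1)) 2
      + (B X (Pi.single 3 1)) 3 + (B X (Pi.single 4 1)) 4 = 0 := by
    intro X
    have h := hunim X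
    rw [LinearMap.trace_eq_matrix_trace ℝ (Pi.basisFun ℝ (Fin 5))] at h
    simpa [Matrix.trace, Fin.sum_univ_five, LinearMap.toMatrix_apply, Matrix.diag,
      Pi.basisFun_apply, Pi.basisFun_repr] using h
  -- unimodularity relations
  have r0 : B (Pi.single 0 1) (Pi.single 1 1) 1 + B (Pi.single 0 1) (Pi.single 2 1) 2 = 0 := by
    have h := htr (Pi.single 0 1)
    simp only [hBXX, hB3, hB4, Pi.zero_apply, zero_add, add_zero] at h
    linarith
  have r1 : B (Pi.single 0 1) (Pi.single 1 1) 0 = B (Pi.single 1 1) (Pi.single 2 1) 2 := by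
    have h := htr (Pi.single 1 1)
    rw [hanti (Pi.single 1 1) (Pi.single 0 1)] at h
    simp only [hBXX, hB3, hB4, Pi.zero_apply, Pi.neg_apply, zero_add, add_zero] at h
    linarith
  have r2 : B (Pi.single 0 1) (Pi.single 2 1) 0 + B (Pi.single 1 1) (Pi.single 2 1) 1 = 0 := by
    have h := htr (Pi.single 2 1)
    rw [hanti (Pi.single 2 1) (Pi.single 0 1), hanti (Pi.single 2 1) (Pi.single 1 1)] at h
    simp only [hBXX, hB3, hB4, Pi.zero_apply, Pi.neg_apply, zero_add, add_zero] at h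
    linarith
  -- d(e k) formula
  have hde : ∀ k : Fin 5, d (e k) =
      -((B (Pi.single 0 1) (Pi.single 1 1) k) • (e 0 * e 1))
      - ((B (Pi.single 0 1) (Pi.single 2 1) k) • (e 0 * e 2))
      - ((B (Pi.single 1 1) (Pi.single 2 1) k) • (e 1 * e 2)) := by
    intro k
    have inner : ∀ g : Fin 5 → ℝ, (∑ k' : Fin 5, (Pi.single k 1 : Fin 5 → ℝ) k' * g k') = g k := by
      intro g
      rw [Finset.sum_eq_single k]
      · simp
      · intro b _ hb; simp [Pi.single_apply, Ne.symm hb]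
      · simp
    have h := hlink (Pi.single k 1)
    rw [show (ι ℝ) (Pi.single k (1:ℝ)) = e k from rfl] at h
    simp only [inner] at h
    rw [h]
    simp only [Fin.sum_univ_five, hB3', hB4', hB3, hB4, Pi.zero_apply, zero_smul, add_zero,
      zero_add, hsq, smul_zero]
    rw [hanti (Pi.single 1 1) (Pi.single 0 1), hanti (Pi.single 2 1) (Pi.single 0 1),
      hanti (Pi.single 2 1) (Pi.single 1 1)]
    simp only [Pi.neg_apply, neg_smul, hsw 0 1 (by decide), hsw 0 2 (by decide),
      hsw 1 2 (by decide), smul_neg, neg_neg]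
    module
  have hd3 : d (e 3) = 0 := by
    rw [hde 3]
    simp [hv3]
  have hd4 : d (e 4) = 0 := by
    rw [hde 4]
    simp [hv4]
  have hleib' : ∀ (i : Fin 5) (x : ExteriorAlgebra ℝ (Fin 5 → ℝ)),
      d (e i * x) = d (e i) * x - e i * d x := fun i x => hleib _ x
  -- goals 1-3
  have g1 : d (e 0 * e 1) = 0 := by
    rw [hleib' 0, hde 0, hde 1]
    simp only [sub_mul, add_mul, mul_add, mul_sub, neg_mul, mul_neg, smul_mul_assoc,
      mul_smul_comm, zero_mul, mul_zero, zero_sub, sub_zero, neg_neg, neg_zero, add_zero,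
      zero_add, smul_neg, smul_zero]
    simp only [mul_assoc, hsq, hsq', hsw 0 1 (by decide), hsw 0 2 (by decide),
      hsw 1 2 (by decide), hsw' 0 1 (by decide), hsw' 0 2 (by decide), hsw' 1 2 (by decide),
      smul_zero, mul_zero, zero_mul, neg_neg, neg_zero, add_zero, zero_add, sub_zero, zero_sub,
      smul_neg, mul_neg, neg_mul, sub_neg_eq_add]
    match_scalars <;> linarith [r0, r1, r2]
  have g2 : d (e 0 * e 2) = 0 := by
    rw [hleib' 0, hde 0, hde 2]
    simp only [sub_mul, add_mul, mul_add, mul_sub, neg_mul, mul_neg, smul_mul_assoc,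
      mul_smul_comm, zero_mul, mul_zero, zero_sub, sub_zero, neg_neg, neg_zero, add_zero,
      zero_add, smul_neg, smul_zero]
    simp only [mul_assoc, hsq, hsq', hsw 0 1 (by decide), hsw 0 2 (by decide),
      hsw 1 2 (by decide), hsw' 0 1 (by decide), hsw' 0 2 (by decide), hsw' 1 2 (by decide),
      smul_zero, mul_zero, zero_mul, neg_neg, neg_zero, add_zero, zero_add, sub_zero, zero_sub,
      smul_neg, mul_neg, neg_mul, sub_neg_eq_add]
    match_scalars <;> linarith [r0, r1, r2]
  have g3 : d (e 1 * e 2) = 0 := by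
    rw [hleib' 1, hde 1, hde 2]
    simp only [sub_mul, add_mul, mul_add, mul_sub, neg_mul, mul_neg, smul_mul_assoc,
      mul_smul_comm, zero_mul, mul_zero, zero_sub, sub_zero, neg_neg, neg_zero, add_zero,
      zero_add, smul_neg, smul_zero]
    simp only [mul_assoc, hsq, hsq', hsw 0 1 (by decide), hsw 0 2 (by decide),
      hsw 1 2 (by decide), hsw' 0 1 (by decide), hsw' 0 2 (by decide), hsw' 1 2 (by decide),
      smul_zero, mul_zero, zero_mul, neg_neg, neg_zero, add_zero, zero_add, sub_zero, zero_sub,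
      smul_neg, mul_neg, neg_mul, sub_neg_eq_add]
    match_scalars <;> linarith [r0, r1, r2]
  have g34 : d (e 3 * e 4) = 0 := by
    rw [hleib' 3, hd3, hd4]
    simp
  have g4 : d (e 0 * e 1 + e 3 * e 4) = 0 := by
    rw [map_add, g1, g34, add_zero]
  have g5 : d ((e 0 * e 3 + e 4 * e 1) * e 2) = 0 := by
    rw [add_mul, map_add, mul_assoc, mul_assoc, hleib' 0, hleib' 4, hleib' 3, hleib' 1,
      hd3, hd4, hde 0, hde 1, hde 2]
    simp only [sub_mul, add_mul, mul_add, mul_sub, neg_mul, mul_neg, smul_mul_assoc,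
      mul_smul_comm, zero_mul, mul_zero, zero_sub, sub_zero, neg_neg, neg_zero, add_zero,
      zero_add, smul_neg, smul_zero]
    simp only [mul_assoc, hsq, hsq',
      hsw 0 1 (by decide), hsw 0 2 (by decide), hsw 0 3 (by decide), hsw 0 4 (by decide),
      hsw 1 2 (by decide), hsw 1 3 (by decide), hsw 1 4 (by decide),
      hsw 2 3 (by decide), hsw 2 4 (by decide), hsw 3 4 (by decide),
      hsw' 0 1 (by decide), hsw' 0 2 (by decide), hsw' 0 3 (by decide), hsw' 0 4 (by decide),
      hsw' 1 2 (by decide), hsw' 1 3 (by decide), hsw' 1 4 (by decide),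
      hsw' 2 3 (by decide), hsw' 2 4 (by decide), hsw' 3 4 (by decide),
      mul_neg, neg_mul, mul_zero, zero_mul, neg_neg, add_zero, zero_add, neg_zero,
      smul_neg, smul_zero, sub_zero, zero_sub, sub_neg_eq_add]
    match_scalars <;> linarith [r0, r1, r2]
  have g6 : d ((e 0 * e 4 + e 1 * e 3) * e 2) = 0 := by
    rw [add_mul, map_add, mul_assoc, mul_assoc, hleib' 0, hleib' 4, hleib' 1, hleib' 3,
      hd3, hd4, hde 0, hde 1, hde 2]
    simp only [sub_mul, add_mul, mul_add, mul_sub, neg_mul, mul_neg, smul_mul_assoc,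
      mul_smul_comm, zero_mul, mul_zero, zero_sub, sub_zero, neg_neg, neg_zero, add_zero,
      zero_add, smul_neg, smul_zero]
    simp only [mul_assoc, hsq, hsq',
      hsw 0 1 (by decide), hsw 0 2 (by decide), hsw 0 3 (by decide), hsw 0 4 (by decide),
      hsw 1 2 (by decide), hsw 1 3 (by decide), hsw 1 4 (by decide),
      hsw 2 3 (by decide), hsw 2 4 (by decide), hsw 3 4 (by decide),
      hsw' 0 1 (by decide), hsw' 0 2 (by decide), hsw' 0 3 (by decide), hsw' 0 4 (by decide),
      hsw' 1 2 (by decide), hsw' 1 3 (by decide), hsw' 1 4 (by decide),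
      hsw' 2 3 (by decide), hsw' 2 4 (by decide), hsw' 3 4 (by decide),
      mul_neg, neg_mul, mul_zero, zero_mul, neg_neg, add_zero, zero_add, neg_zero,
      smul_neg, smul_zero, sub_zero, zero_sub, sub_neg_eq_add]
    match_scalars <;> linarith [r0, r1, r2]
  refine ⟨g1, g2, g3, g4, g5, g6, Pi.single 2 1,
    ![e 0 * e 1 + e 3 * e 4, e 0 * e 3 + e 4 * e 1, e 0 * e 4 + e 1 * e 3], ?_, ?_, ?_, ?_, ?_⟩
  · intro i
    fin_cases i <;>
    · refine Submodule.add_mem _ (Submodule.subset_span ?_) (Submodule.subset_span ?_) <;>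
        exact ⟨_, _, rfl⟩
  · refine ⟨(e 0 * e 1 + e 3 * e 4) * (e 0 * e 1 + e 3 * e 4), fun i j => ?_, ?_⟩
    · fin_cases i <;> fin_cases j <;>
        simp [mul_add, add_mul, mul_assoc, hsq, hsq',
            hsw 0 1 (by decide), hsw 0 2 (by decide), hsw 0 3 (by decide), hsw 0 4 (by decide),
            hsw 1 2 (by decide), hsw 1 3 (by decide), hsw 1 4 (by decide),
            hsw 2 3 (by decide), hsw 2 4 (by decide), hsw 3 4 (by decide),
            hsw' 0 1 (by decide), hsw' 0 2 (by decide), hsw' 0 3 (by decide), hsw' 0 4 (by decide),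
            hsw' 1 2 (by decide), hsw' 1 3 (by decide), hsw' 1 4 (by decide),
            hsw' 2 3 (by decide), hsw' 2 4 (by decide), hsw' 3 4 (by decide),
            mul_neg, neg_mul, mul_zero, zero_mul, neg_neg, add_zero, zero_add, neg_zero]
    · show (e 0 * e 1 + e 3 * e 4) * (e 0 * e 1 + e 3 * e 4) * e 2 ≠ 0
      have hv : (e 0 * e 1 + e 3 * e 4) * (e 0 * e 1 + e 3 * e 4) * e 2 =
          (2 : ℝ) • (e 0 * (e 1 * (e 2 * (e 3 * e 4)))) := by
        simp only [mul_add, add_mul, mul_assoc, hsq, hsq',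
          hsw 0 1 (by decide), hsw 0 2 (by decide), hsw 0 3 (by decide), hsw 0 4 (by decide),
          hsw 1 2 (by decide), hsw 1 3 (by decide), hsw 1 4 (by decide),
          hsw 2 3 (by decide), hsw 2 4 (by decide), hsw 3 4 (by decide),
          hsw' 0 1 (by decide), hsw' 0 2 (by decide), hsw' 0 3 (by decide), hsw' 0 4 (by decide),
          hsw' 1 2 (by decide), hsw' 1 3 (by decide), hsw' 1 4 (by decide),
          hsw' 2 3 (by decide), hsw' 2 4 (by decide), hsw' 3 4 (by decide),
          mul_neg, neg_mul, mul_zero, zero_mul, neg_neg, add_zero, zero_add, neg_zero]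
        module
      rw [hv]
      exact smul_ne_zero two_ne_zero top_ne_zero
  · exact g4
  · exact g5
  · exact g6
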